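/- Let x be the 8×8 matrix from the preceding setup (with parameters a,…,g ∈ κ, char(κ) ≠ 2). Then x⁵ has (1,8) entry equal to b² (up to sign) and all other entries zero; in particular x⁵ = 0 if and only if b = 0. -/

import Mathlib

/-- The 8×8 matrix with first row (0,a,b,c,d,e,f,g), x₂₇ = 1, x₂₈ = f, x₃₄ = 1, x₃₈ = e,
x₄₅ = 1, x₄₈ = d, x₅₆ = −1, x₅₈ = −c, x₆₈ = −b, x₇₈ = −a, and all other entries 0. -/
def xmat8 (κ : Type*) [Field κ] (a b c d e f g : κ) : Matrix (Fin 8) (Fin 8) κ :=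
  !![0,a,b,c,d,e,f,g;
     0,0,0,0,0,0,1,f;
     0,0,0,1,0,0,0,e;
     0,0,0,0,1,0,0,d;
     0,0,0,0,0,-1,0,-c;
     0,0,0,0,0,0,0,-b;
     0,0,0,0,0,0,0,-a;
     0,0,0,0,0,0,0,0]

/-! x is strictly upper triangular and its first row pairs skew-symmetrically with its last
column, so the (1,8) entry af + be + cd - dc - eb - fa of x² cancels. Squaring x² leaves
x⁴ = b (E₃₈ - E₁₆), and since the last row of x vanishes and x₆₈ = -b, x⁵ = x⁴ x = b² E₁₈. -/

theorem Matrix.single_eq_zero_iff {m n α : Type*} [Zero α] [DecidableEq m] [DecidableEq n]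
    (i : m) (j : n) (c : α) : Matrix.single i j c = 0 ↔ c = 0 :=
  ⟨fun h => by simpa using congr_fun (congr_fun h i) j, fun h => h ▸ Matrix.single_zero i j⟩

section
variable {κ : Type*} [Field κ] (a b c d e f g : κ)

theorem xmat8_sq : xmat8 κ a b c d e f g ^ 2 =
    !![0,0,0,b,c,-d,a,0;
       0,0,0,0,0,0,0,-a;
       0,0,0,0,1,0,0,d;
       0,0,0,0,0,-1,0,-c;
       0,0,0,0,0,0,0,b;
       0,0,0,0,0,0,0,0;
       0,0,0,0,0,0,0,0;
       0,0,0,0,0,0,0,0] := by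
  rw [sq, xmat8]
  -- reversing `zero_empty` lets `cons_zero_zero` fold the zero rows of the product into `0`
  simp [Matrix.cons_mul, Matrix.vecMul_cons, -Matrix.zero_empty, ← Matrix.zero_empty]
  ring

theorem xmat8_pow_four : xmat8 κ a b c d e f g ^ 4 =
    !![0,0,0,0,0,-b,0,0;
       0,0,0,0,0,0,0,0;
       0,0,0,0,0,0,0,b;
       0,0,0,0,0,0,0,0;
       0,0,0,0,0,0,0,0;
       0,0,0,0,0,0,0,0;
       0,0,0,0,0,0,0,0;
       0,0,0,0,0,0,0,0] := by
  rw [(pow_mul _ 2 2 : xmat8 κ a b c d e f g ^ 4 = _), xmat8_sq, sq]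
  simp [Matrix.cons_mul, Matrix.vecMul_cons, -Matrix.zero_empty, ← Matrix.zero_empty]
  ring

theorem xmat8_pow_five : xmat8 κ a b c d e f g ^ 5 = Matrix.single 0 7 (b ^ 2) := by
  rw [pow_succ, xmat8_pow_four, xmat8]
  simp [Matrix.cons_mul, Matrix.vecMul_cons, -Matrix.zero_empty, ← Matrix.zero_empty]
  ext i j
  fin_cases i <;> fin_cases j <;> simp [sq]

end

theorem stmt10_general (κ : Type*) [Field κ] (a b c d e f g : κ) :
    ((xmat8 κ a b c d e f g) ^ 5 = Matrix.single (0 : Fin 8) (7 : Fin 8) (b ^ 2) ∨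
     (xmat8 κ a b c d e f g) ^ 5 = -Matrix.single (0 : Fin 8) (7 : Fin 8) (b ^ 2)) ∧
    ((xmat8 κ a b c d e f g) ^ 5 = 0 ↔ b = 0) := by
  rw [xmat8_pow_five, Matrix.single_eq_zero_iff, pow_eq_zero_iff two_ne_zero]
  exact ⟨Or.inl rfl, Iff.rfl⟩

/-- x⁵ is the matrix whose only possibly-nonzero entry is ±b² in position (1,8);
in particular x⁵ = 0 iff b = 0. -/
theorem stmt10 (κ : Type*) [Field κ] (h2 : (2 : κ) ≠ 0) (a b c d e f g : κ) :
    ((xmat8 κ a b c d e f g) ^ 5 = Matrix.single (0 : Fin 8) (7 : Fin 8) (b ^ 2) ∨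
     (xmat8 κ a b c d e f g) ^ 5 = -Matrix.single (0 : Fin 8) (7 : Fin 8) (b ^ 2)) ∧
    ((xmat8 κ a b c d e f g) ^ 5 = 0 ↔ b = 0) :=
  stmt10_general κ a b c d e f g
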